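/- Let k > 0, D > 0 and σ > 0 be real numbers, let I be a nonempty finite index set, let t_i > 0 for i ∈ I be real numbers and set T = Σ_{i∈I} t_i. Let b_v : ℝ → ℝ and b_i : ℝ → ℝ (i ∈ I) be differentiable functions, and define u_v(h) = (T/k)·(exp(b_v(h)·ln(1+k)/(2D)) − 1) and, for each i ∈ I, u_i(h) = (t_i/k)·(exp(b_i(h)·σ·ln(1+k)/(2D)) − 1). Suppose u_v(h) = Σ_{i∈I} u_i(h) for all h ∈ ℝ, and suppose that at a point h₀ all the derivatives b_i'(h₀) for i ∈ I are equal to a common value r. Then r = (1/σ)·b_v'(h₀). -/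

import Mathlib

/-! Writing `c = log (1 + k) / (2 D)` and using `T = ∑ tᵢ`, the node identity says
`T · exp (c · b_v) = ∑ tᵢ · exp (σ c · bᵢ)` as functions. Differentiating at `h₀`, where all
`σ c · bᵢ` have slope `σ c r`, the right-hand side has derivative `(∑ tᵢ exp (σ c bᵢ)) · σ c r`,
i.e. the function's own value times `σ c r`, while the left-hand side has derivative its value
times `c · b_v'`. The common value is `T · exp (c b_v) > 0`, so `b_v' = σ r`. -/

open Finset Real

theorem mul_exp_eq_sum_mul_exp_of_sum_eq {ι : Type*} {s : Finset ι} {k T x : ℝ} {t y : ι → ℝ}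
    (hk : k ≠ 0) (hT : T = ∑ i ∈ s, t i)
    (h : T / k * (exp x - 1) = ∑ i ∈ s, t i / k * (exp (y i) - 1)) :
    T * exp x = ∑ i ∈ s, t i * exp (y i) := by
  have hsum : ∑ i ∈ s, t i / k * (exp (y i) - 1) = (∑ i ∈ s, t i * exp (y i) - T) / k := by
    rw [hT, ← sum_sub_distrib, sum_div]
    exact sum_congr rfl fun i _ ↦ by ring
  rw [hsum, div_mul_eq_mul_div, div_left_inj' hk] at h
  linarith

theorem eq_of_hasDerivAt_of_mul_exp_eq_sum_mul_exp {ι : Type*} {s : Finset ι} {T x g' ρ : ℝ}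
    {t : ι → ℝ} {g : ℝ → ℝ} {f : ι → ℝ → ℝ} (hT : T ≠ 0)
    (heq : ∀ h, T * exp (g h) = ∑ i ∈ s, t i * exp (f i h))
    (hg : HasDerivAt g g' x) (hf : ∀ i ∈ s, HasDerivAt (f i) ρ x) : g' = ρ := by
  have hlhs : HasDerivAt (fun h ↦ T * exp (g h)) (T * exp (g x) * g') x := by
    simpa only [mul_assoc] using hg.exp.const_mul T
  have hrhs : HasDerivAt (fun h ↦ T * exp (g h)) (T * exp (g x) * ρ) x := by
    have hsum := HasDerivAt.fun_sum fun i hi ↦ ((hf i hi).exp.const_mul (t i))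
    rw [funext heq, heq x, sum_mul]
    simpa only [mul_assoc] using hsum
  exact mul_left_cancel₀ (mul_ne_zero hT (exp_ne_zero _)) (hlhs.unique hrhs)

/-- if all children's dual rates agree, the common rate is `(1/σ)·b_v'` (Lemma 3.3 / 4.3). -/
theorem stmt_3 {ι : Type*} (s : Finset ι) (hs : s.Nonempty)
    (k D σ : ℝ) (hk : 0 < k) (hD : 0 < D) (hσ : 0 < σ)
    (t : ι → ℝ) (ht : ∀ i ∈ s, 0 < t i)
    (T : ℝ) (hT : T = ∑ i ∈ s, t i)
    (bv : ℝ → ℝ) (b : ι → ℝ → ℝ)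
    (hbv : Differentiable ℝ bv) (hb : ∀ i ∈ s, Differentiable ℝ (b i))
    (uv : ℝ → ℝ) (u : ι → ℝ → ℝ)
    (huv : ∀ h : ℝ, uv h = (T / k) * (Real.exp (bv h * Real.log (1 + k) / (2 * D)) - 1))
    (hu : ∀ i ∈ s, ∀ h : ℝ,
      u i h = (t i / k) * (Real.exp (b i h * σ * Real.log (1 + k) / (2 * D)) - 1))
    (hid : ∀ h : ℝ, uv h = ∑ i ∈ s, u i h)
    (h₀ r : ℝ) (hr : ∀ i ∈ s, deriv (b i) h₀ = r) :
    r = (1 / σ) * deriv bv h₀ := by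
  have hlog : 0 < log (1 + k) := log_pos (by linarith)
  have hTpos : 0 < T := hT ▸ sum_pos ht hs
  have hexp (h : ℝ) : T * exp (bv h * log (1 + k) / (2 * D))
      = ∑ i ∈ s, t i * exp (b i h * σ * log (1 + k) / (2 * D)) := by
    refine mul_exp_eq_sum_mul_exp_of_sum_eq hk.ne' hT ?_
    rw [← huv, hid, sum_congr rfl fun i hi ↦ hu i hi h]
  have hbv' := ((hbv h₀).hasDerivAt.mul_const (log (1 + k))).div_const (2 * D)
  have hb' (i : ι) (hi : i ∈ s) : HasDerivAt (fun h ↦ b i h * σ * log (1 + k) / (2 * D))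
      (r * σ * log (1 + k) / (2 * D)) h₀ :=
    hr i hi ▸ (((hb i hi h₀).hasDerivAt.mul_const σ).mul_const (log (1 + k))).div_const (2 * D)
  have hrate := eq_of_hasDerivAt_of_mul_exp_eq_sum_mul_exp hTpos.ne' hexp hbv' hb'
  rw [div_left_inj' (by positivity), mul_left_inj' hlog.ne'] at hrate
  rw [hrate]
  field_simp
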